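/- arXiv:0905.1459 — 2 statements merged into one kernel-verified Lean document; each statement's English description precedes it below -/
import Mathlib

section
/- Let Γ be a group and H a finite index subgroup. Suppose that for every finitely generated subgroup K of Γ, every ZK-module that is projective over Z(K ∩ H) is projective over ZK. Then every ZΓ-module M that is projective over ZH is flat over ZΓ. -/
open CategoryTheory MonoidAlgebra

noncomputable instance (R : Type) [Ring R] : HasExt.{1} (ModuleCat.{0} R) := by
  letI := HasDerivedCategory.standard (ModuleCat.{0} R)
  exact hasExt_of_hasDerivedCategory _

variable {Γ : Type} [Group Γ]

/-- The integral group ring. -/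
abbrev GR (Γ : Type) [Group Γ] : Type := MonoidAlgebra ℤ Γ

/-- The `ℤK`-module structure on a `ℤΓ`-module `M` obtained by restriction to
a subgroup `K ≤ Γ`. -/
noncomputable def resModule (K : Subgroup Γ) (M : Type) [AddCommGroup M]
    [Module (GR Γ) M] : Module (GR K) M :=
  Module.compHom M (mapDomainRingHom ℤ K.subtype)

/-- `M` is projective over the group ring of the subgroup `K`. -/
def IsProjOver (K : Subgroup Γ) (M : Type) [AddCommGroup M] [Module (GR Γ) M] : Prop :=
  letI := resModule K M
  Module.Projective (GR K) M

/-- Flatness of a left module over a possibly noncommutative ring, via the standard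
equational criterion (equivalent to the vanishing of `Tor₁`). -/
def IsFlatMod (R M : Type) [Ring R] [AddCommGroup M] [Module R M] : Prop :=
  ∀ (n : ℕ) (r : Fin n → R) (m : Fin n → M), (∑ j, r j • m j) = 0 →
    ∃ (l : ℕ) (a : Fin n → Fin l → R) (y : Fin l → M),
      (∀ j, m j = ∑ k, a j k • y k) ∧ ∀ k, (∑ j, r j * a j k) = 0


/-! A relation `∑ rⱼ • mⱼ = 0` over `ℤΓ` involves only finitely many group elements, so it is
already a relation over `ℤK` for the finitely generated subgroup `K` they generate; since
projective modules satisfy the equational criterion for flatness, it suffices that `M` be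
projective over every such `ℤK`. Restriction along an injective group homomorphism `G → G'`
preserves projectivity, because `ℤG'` is a free `ℤG`-module on a set of right coset
representatives. Hence `M` is projective over `ℤ(K ∩ H)`, and the hypothesis upgrades this to
projectivity over `ℤK`. -/

theorem Module.Projective.of_isScalarTower {S R M : Type*} [Ring S] [Ring R] [Module S R]
    [IsScalarTower S R R] [Module.Projective S R] [AddCommGroup M] [Module R M] [Module S M]
    [IsScalarTower S R M] [Module.Projective R M] : Module.Projective S M := by
  classical
  obtain ⟨s, hs⟩ := Module.projective_def'.mp ‹Module.Projective R M›
  have : Module.Projective S (M →₀ R) := .of_equiv' (finsuppLequivDFinsupp S).symm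
  exact .of_split (s.restrictScalars S) ((Finsupp.linearCombination R id).restrictScalars S)
    (LinearMap.ext fun m => congr($hs m))

theorem isFlatMod_of_projective {S M : Type} [Ring S] [AddCommGroup M] [Module S M]
    [Module.Projective S M] : IsFlatMod S M := by
  classical
  obtain ⟨s, hs⟩ := Module.projective_def.mp ‹Module.Projective S M›
  intro n r m hrm
  let F : Finset M := Finset.univ.biUnion fun j => (s (m j)).support
  let y : Fin F.card → M := fun k => F.equivFin.symm k
  have sum_y : ∀ g : M → M, ∑ k, g (y k) = ∑ x ∈ F, g x := fun g =>
    (Equiv.sum_comp F.equivFin.symm fun x => g x).trans (F.sum_coe_sort g)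
  refine ⟨F.card, fun j k => s (m j) (y k), y, fun j => ?_, fun k => ?_⟩
  · have hsupp : (s (m j)).support ⊆ F :=
      Finset.subset_biUnion_of_mem (fun j => (s (m j)).support) (Finset.mem_univ j)
    calc m j = Finsupp.linearCombination S id (s (m j)) := (hs (m j)).symm
      _ = ∑ x ∈ F, s (m j) x • x := by
        rw [Finsupp.linearCombination_apply, Finsupp.sum_of_support_subset _ hsupp _ (by simp)]
        rfl
      _ = ∑ k, s (m j) (y k) • y k := (sum_y fun x => s (m j) x • x).symm
  · calc ∑ j, r j * s (m j) (y k) = s (∑ j, r j • m j) (y k) := by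
          simp [map_sum, Finsupp.finsetSum_apply]
      _ = 0 := by rw [hrm, map_zero, Finsupp.coe_zero, Pi.zero_apply]

section GroupRing

open Function

variable {G G' : Type} [Group G] [Group G'] {f : G →* G'}

theorem exists_equiv_prod_of_injective (hf : Injective f) :
    ∃ (T : Type) (e : G' ≃ T × G), ∀ g y, e (f g * y) = ((e y).1, g * (e y).2) := by
  let T := Quotient (QuotientGroup.rightRel f.range)
  let π : G' → T := Quotient.mk _
  have hπ : ∀ g y, π (f g * y) = π y := fun g y =>
    Quotient.sound (QuotientGroup.rightRel_apply.mpr (by simp))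
  have hmem : ∀ y, y * (π y).out⁻¹ ∈ f.range := fun y =>
    QuotientGroup.rightRel_apply.mp (Quotient.exact (Quotient.out_eq (π y)))
  let σ : G' → G := fun y => (MonoidHom.ofInjective hf).symm ⟨_, hmem y⟩
  have hσ : ∀ y, f (σ y) = y * (π y).out⁻¹ := fun y =>
    MonoidHom.apply_ofInjective_symm hf ⟨_, hmem y⟩
  refine ⟨_, ⟨fun y => (π y, σ y), fun p : T × G => f p.2 * p.1.out, fun y => by simp [hσ],
    fun ⟨t, g⟩ => ?_⟩, fun g y => ?_⟩
  · have ht : π (f g * t.out) = t := (hπ g _).trans (Quotient.out_eq t)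
    refine Prod.ext ht (hf ?_)
    simp [hσ, ht]
  · refine Prod.ext (hπ g y) (hf ?_)
    simp [hσ, hπ, mul_assoc]

theorem groupRing_free_of_injective (hf : Injective f) :
    letI := Module.compHom (GR G') (mapDomainRingHom ℤ f)
    Module.Free (GR G) (GR G') := by
  let _ := Module.compHom (GR G') (mapDomainRingHom ℤ f)
  obtain ⟨T, e, he⟩ := exists_equiv_prod_of_injective hf
  let E : GR G' ≃+ (T →₀ GR G) :=
    coeffAddEquiv.trans <| (Finsupp.domCongr e).trans <|
      Finsupp.curryAddEquiv.trans (Finsupp.mapRange.addEquiv coeffAddEquiv.symm)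
  have hE : ∀ y c, E (single y c) = Finsupp.single (e y).1 (single (e y).2 c) := by
    simp [E]
  have hE_mul : ∀ (x : GR G) (y : GR G'), E (mapDomainRingHom ℤ f x * y) = x • E y := by
    intro x y
    induction x using MonoidAlgebra.induction_linear with
    | zero => simp
    | add x₁ x₂ h₁ h₂ => rw [map_add, add_mul, map_add, h₁, h₂, add_smul]
    | single g a =>
      induction y using MonoidAlgebra.induction_linear with
      | zero => simp
      | add y₁ y₂ h₁ h₂ => rw [mul_add, map_add, h₁, h₂, map_add, smul_add]
      | single y c => simp [hE, he, single_mul_single, Finsupp.smul_single]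
  exact .of_equiv (E.toLinearEquiv hE_mul).symm

theorem projective_compHom_of_injective (hf : Injective f) (M : Type) [AddCommGroup M]
    [Module (GR G') M] [Module.Projective (GR G') M] :
    letI := Module.compHom M (mapDomainRingHom ℤ f)
    Module.Projective (GR G) M := by
  let _ := Module.compHom (GR G') (mapDomainRingHom ℤ f)
  let _ := Module.compHom M (mapDomainRingHom ℤ f)
  have := groupRing_free_of_injective hf
  have : IsScalarTower (GR G) (GR G') (GR G') := ⟨fun _ _ _ => mul_assoc _ _ _⟩
  have : IsScalarTower (GR G) (GR G') M := ⟨fun _ _ _ => mul_smul _ _ _⟩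
  exact .of_isScalarTower (R := GR G')

end GroupRing

theorem IsProjOver.subgroupOf {H : Subgroup Γ} {M : Type} [AddCommGroup M] [Module (GR Γ) M]
    (hM : IsProjOver H M) (K : Subgroup Γ) :
    letI := resModule K M
    IsProjOver (Γ := K) (H.subgroupOf K) M := by
  let _ := resModule K M
  let _ := resModule H M
  have : Module.Projective (GR H) M := hM
  let j : H.subgroupOf K →* H :=
    (K.subtype.comp (H.subgroupOf K).subtype).codRestrict H fun x => x.2
  have hj : Function.Injective j := fun x y hxy =>
    Subtype.ext (Subtype.ext congr(($hxy : Γ)))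
  have hcomp : (mapDomainRingHom ℤ K.subtype).comp (mapDomainRingHom ℤ (H.subgroupOf K).subtype)
      = (mapDomainRingHom ℤ H.subtype).comp (mapDomainRingHom ℤ j) := by
    rw [← mapDomainRingHom_comp, ← mapDomainRingHom_comp]
    rfl
  have hinst : Module.compHom M (mapDomainRingHom ℤ j) = resModule (H.subgroupOf K) M :=
    Module.ext' _ _ fun x m => congr($hcomp.symm x • m)
  unfold IsProjOver
  rw [← hinst]
  exact projective_compHom_of_injective hj M

theorem exists_mapDomainRingHom_subtype_eq {K : Subgroup Γ} (x : GR Γ)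
    (hx : ↑x.coeff.support ⊆ (K : Set Γ)) :
    ∃ x' : GR K, mapDomainRingHom ℤ K.subtype x' = x :=
  ⟨comapDomain K.subtype K.subtype_injective x, mapDomain_comapDomain (by simpa using hx) _⟩

theorem isFlatMod_of_forall_fg {M : Type} [AddCommGroup M] [Module (GR Γ) M]
    (h : ∀ K : Subgroup Γ, K.FG → letI := resModule K M; IsFlatMod (GR K) M) :
    IsFlatMod (GR Γ) M := by
  intro n r m hrm
  let K := Subgroup.closure (⋃ j, ((r j).coeff.support : Set Γ))
  have hK : K.FG := (Subgroup.fg_iff K).mpr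
    ⟨_, rfl, Set.finite_iUnion fun j => (r j).coeff.support.finite_toSet⟩
  choose r' hr' using fun j => exists_mapDomainRingHom_subtype_eq (K := K) (r j)
    fun g hg => Subgroup.subset_closure (Set.mem_iUnion.mpr ⟨j, hg⟩)
  let _ := resModule K M
  obtain ⟨l, a, y, hm, ha⟩ := h K hK n r' m (by simp only [← hr'] at hrm; exact hrm)
  refine ⟨l, fun j k => mapDomainRingHom ℤ K.subtype (a j k), y, hm, fun k => ?_⟩
  simp_rw [← hr', ← map_mul, ← map_sum, ha k, map_zero]

theorem stmt6_general {Γ : Type} [Group Γ] (H : Subgroup Γ)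
    (hyp : ∀ K : Subgroup Γ, K.FG →
      ∀ (P : Type) [AddCommGroup P] [Module (GR ↥K) P],
        IsProjOver (Γ := ↥K) (H.subgroupOf K) P → Module.Projective (GR ↥K) P)
    (M : Type) [AddCommGroup M] [Module (GR Γ) M]
    (hM : IsProjOver H M) :
    IsFlatMod (GR Γ) M := by
  refine isFlatMod_of_forall_fg fun K hK => ?_
  let _ := resModule K M
  have := hyp K hK M (hM.subgroupOf K)
  exact isFlatMod_of_projective

theorem stmt6 {Γ : Type} [Group Γ] (H : Subgroup Γ) [H.FiniteIndex]
    (hyp : ∀ K : Subgroup Γ, K.FG →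
      ∀ (P : Type) [AddCommGroup P] [Module (GR ↥K) P],
        IsProjOver (Γ := ↥K) (H.subgroupOf K) P → Module.Projective (GR ↥K) P)
    (M : Type) [AddCommGroup M] [Module (GR Γ) M]
    (hM : IsProjOver H M) :
    IsFlatMod (GR Γ) M :=
  stmt6_general H hyp M hM
end

section
/- Let φ : Γ → Γ' be an injective group homomorphism, H' ≤ Γ' a finite index subgroup, and set H = φ⁻¹(H'), with [Γ:H] finite. Suppose every ZΓ'-module projective over ZH' is projective over ZΓ'. Then every ZΓ-module M that is projective over ZH and such that the induced module ZΓ' ⊗_{ZΓ} M is projective over ZH', is projective over ZΓ. -/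
open CategoryTheory MonoidAlgebra

variable {Γ : Type} [Group Γ]

/-!
By hypothesis the induced module `I = ℤΓ' ⊗_{ℤΓ} M` is projective over `ℤΓ'`. Since `φ` is
injective, `Γ'` is a disjoint union of cosets `φ(Γ) t`, so `ℤΓ'` is a free `ℤΓ`-module and
`I` is projective over `ℤΓ` as well. Finally `M` is a `ℤΓ`-direct summand of `I`. The
retraction `I → M` is evaluation at `1` composed with the map `I → Hom_{ℤΓ}(ℤΓ', M)` that the
universal property of `I` attaches to `m ↦ (b ↦ π(b) • m)`, where the `ℤΓ`-bimodule map
`π : ℤΓ' → ℤΓ` kills the group elements outside `φ(Γ)`.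
-/

theorem Module.Projective.trans {R S P : Type*} [Semiring R] [Semiring S] [Module R S]
    [IsScalarTower R S S] [AddCommMonoid P] [Module S P] [Module R P] [IsScalarTower R S P]
    [Module.Projective R S] [hP : Module.Projective S P] : Module.Projective R P := by
  classical
  obtain ⟨s, hs⟩ := hP
  have : Module.Projective R (P →₀ S) := .of_equiv (finsuppLequivDFinsupp R).symm
  exact .of_split (s.restrictScalars R) ((Finsupp.linearCombination S id).restrictScalars R)
    (LinearMap.ext hs)

section Transversal

variable {Γ Γ' : Type*} [Group Γ] [Group Γ'] {φ : Γ →* Γ'} {T : Set Γ'}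

noncomputable def Subgroup.IsComplement.equivOfInjective
    (hT : Subgroup.IsComplement (φ.range : Set Γ') T) (hφ : Function.Injective φ) :
    Γ' ≃ T × Γ :=
  hT.equiv.trans <| (Equiv.prodComm _ _).trans <|
    Equiv.prodCongr (Equiv.refl T) (MonoidHom.ofInjective hφ).symm.toEquiv

lemma Subgroup.IsComplement.equivOfInjective_mul_left
    (hT : Subgroup.IsComplement (φ.range : Set Γ') T) (hφ : Function.Injective φ)
    (g : Γ) (δ : Γ') :
    hT.equivOfInjective hφ (φ g * δ) =
      ((hT.equivOfInjective hφ δ).1, g * (hT.equivOfInjective hφ δ).2) := by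
  simp only [equivOfInjective, Equiv.trans_apply,
    hT.equiv_mul_left_of_mem (φ.mem_range.2 ⟨g, rfl⟩)]
  have : (MonoidHom.ofInjective hφ).symm ⟨φ g, φ.mem_range.2 ⟨g, rfl⟩⟩ = g :=
    (MonoidHom.ofInjective hφ).symm_apply_eq.2 rfl
  exact Prod.ext rfl
    ((map_mul (MonoidHom.ofInjective hφ).symm _ _).trans (congrArg (· * _) this))

variable {k : Type*} [Semiring k]

noncomputable def Subgroup.IsComplement.monoidAlgebraAddEquiv
    (hT : Subgroup.IsComplement (φ.range : Set Γ') T) (hφ : Function.Injective φ) :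
    k[Γ'] ≃+ (T →₀ k[Γ]) :=
  coeffAddEquiv.trans <| (Finsupp.domCongr (hT.equivOfInjective hφ)).trans <|
    Finsupp.curryAddEquiv.trans (Finsupp.mapRange.addEquiv coeffAddEquiv.symm)

lemma Subgroup.IsComplement.monoidAlgebraAddEquiv_single
    (hT : Subgroup.IsComplement (φ.range : Set Γ') T) (hφ : Function.Injective φ)
    (δ : Γ') (r : k) :
    hT.monoidAlgebraAddEquiv hφ (single δ r) =
      Finsupp.single (hT.equivOfInjective hφ δ).1 (single (hT.equivOfInjective hφ δ).2 r) := by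
  simp [monoidAlgebraAddEquiv]

end Transversal

theorem MonoidAlgebra.free_of_injective {k Γ Γ' : Type*} [Semiring k] [Group Γ] [Group Γ']
    {φ : Γ →* Γ'} (hφ : Function.Injective φ) :
    letI : Module k[Γ] k[Γ'] := Module.compHom k[Γ'] (mapDomainRingHom k φ)
    Module.Free k[Γ] k[Γ'] := by
  let : Module k[Γ] k[Γ'] := Module.compHom k[Γ'] (mapDomainRingHom k φ)
  obtain ⟨T, hT, -⟩ := Subgroup.exists_isComplement_right φ.range 1
  let E := hT.monoidAlgebraAddEquiv (k := k) hφ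
  have hE (a : k[Γ]) (x : k[Γ']) : E (mapDomainRingHom k φ a * x) = a • E x := by
    induction a using MonoidAlgebra.induction_linear with
    | zero => simp
    | add a b ha hb => rw [map_add, add_mul, map_add, ha, hb, add_smul]
    | single g r =>
      induction x using MonoidAlgebra.induction_linear with
      | zero => simp
      | add x y hx hy => rw [mul_add, map_add, hx, hy, map_add, smul_add]
      | single δ n =>
        rw [mapDomainRingHom_apply, mapDomain_single, single_mul_single,
          hT.monoidAlgebraAddEquiv_single, hT.monoidAlgebraAddEquiv_single,
          hT.equivOfInjective_mul_left, Finsupp.smul_single, smul_eq_mul, single_mul_single]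
  exact .of_basis (.ofRepr { E with map_smul' := hE })

namespace MonoidAlgebra
variable {k Γ Γ' : Type*} [Semiring k] [Group Γ] [Group Γ'] {φ : Γ →* Γ'}
  (hφ : Function.Injective φ)

lemma comapDomain_single_map_mul_single (g : Γ) (r : k) (δ : Γ') (n : k) :
    comapDomain φ hφ (single (φ g) r * single δ n) =
      single g r * comapDomain φ hφ (single δ n) := by
  rw [single_mul_single]
  by_cases h : δ ∈ Set.range φ
  · obtain ⟨d, rfl⟩ := h
    rw [← map_mul, comapDomain_single_map, comapDomain_single_map, single_mul_single]
  · have h' : φ g * δ ∉ Set.range φ := by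
      rintro ⟨c, hc⟩
      exact h ⟨g⁻¹ * c, by rw [map_mul, map_inv, hc, inv_mul_cancel_left]⟩
    rw [comapDomain_single_of_not_mem_range h', comapDomain_single_of_not_mem_range h, mul_zero]

lemma comapDomain_single_mul_single_map (g : Γ) (r : k) (δ : Γ') (n : k) :
    comapDomain φ hφ (single δ n * single (φ g) r) =
      comapDomain φ hφ (single δ n) * single g r := by
  rw [single_mul_single]
  by_cases h : δ ∈ Set.range φ
  · obtain ⟨d, rfl⟩ := h
    rw [← map_mul, comapDomain_single_map, comapDomain_single_map, single_mul_single]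
  · have h' : δ * φ g ∉ Set.range φ := by
      rintro ⟨c, hc⟩
      exact h ⟨c * g⁻¹, by rw [map_mul, map_inv, hc, mul_inv_cancel_right]⟩
    rw [comapDomain_single_of_not_mem_range h', comapDomain_single_of_not_mem_range h, zero_mul]

lemma comapDomain_mapDomainRingHom_mul (a : k[Γ]) (b : k[Γ']) :
    comapDomain φ hφ (mapDomainRingHom k φ a * b) = a * comapDomain φ hφ b := by
  induction a using MonoidAlgebra.induction_linear with
  | zero => simp [comapDomain_zero]
  | add a₁ a₂ h₁ h₂ => rw [map_add, add_mul, comapDomain_add, h₁, h₂, add_mul]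
  | single g r =>
    induction b using MonoidAlgebra.induction_linear with
    | zero => simp [comapDomain_zero]
    | add b₁ b₂ h₁ h₂ => rw [mul_add, comapDomain_add, h₁, h₂, comapDomain_add, mul_add]
    | single δ n =>
      rw [mapDomainRingHom_apply, mapDomain_single, comapDomain_single_map_mul_single]

lemma comapDomain_mul_mapDomainRingHom (a : k[Γ]) (b : k[Γ']) :
    comapDomain φ hφ (b * mapDomainRingHom k φ a) = comapDomain φ hφ b * a := by
  induction a using MonoidAlgebra.induction_linear with
  | zero => simp [comapDomain_zero]
  | add a₁ a₂ h₁ h₂ => rw [map_add, mul_add, comapDomain_add, h₁, h₂, mul_add]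
  | single g r =>
    induction b using MonoidAlgebra.induction_linear with
    | zero => simp [comapDomain_zero]
    | add b₁ b₂ h₁ h₂ => rw [add_mul, comapDomain_add, h₁, h₂, comapDomain_add, add_mul]
    | single δ n =>
      rw [mapDomainRingHom_apply, mapDomain_single, comapDomain_single_mul_single_map]

lemma comapDomain_one : comapDomain φ hφ (1 : k[Γ']) = 1 := by
  rw [one_def, ← map_one φ, comapDomain_single_map, one_def]

end MonoidAlgebra

universe u

noncomputable section Coinduction

variable (k : Type u) {Γ Γ' : Type u} [Ring k] [Group Γ] [Group Γ'] (φ : Γ →* Γ')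
  (M : Type u) [AddCommGroup M] [Module k[Γ] M]

def coindSubgroup : AddSubgroup (k[Γ'] →+ M) where
  carrier := {f | ∀ a b, f (mapDomainRingHom k φ a * b) = a • f b}
  add_mem' {f g} hf hg a b := by simp only [AddMonoidHom.add_apply, hf a b, hg a b, smul_add]
  zero_mem' a b := (smul_zero a).symm
  neg_mem' {f} hf a b := by simp only [AddMonoidHom.neg_apply, hf a b, smul_neg]

/-- The coinduced module `Hom_{kΓ}(kΓ', M)`. -/
def Coind : Type u := coindSubgroup k φ M

namespace Coind

instance : AddCommGroup (Coind k φ M) := inferInstanceAs (AddCommGroup (coindSubgroup k φ M))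

variable {k φ M}

instance : FunLike (Coind k φ M) k[Γ'] M where
  coe f := f.1.1
  coe_injective _ _ h := Subtype.ext (DFunLike.coe_injective h)

instance : AddMonoidHomClass (Coind k φ M) k[Γ'] M where
  map_add f := f.1.map_add
  map_zero f := f.1.map_zero

@[ext] lemma ext {f g : Coind k φ M} (h : ∀ b, f b = g b) : f = g := DFunLike.ext _ _ h

lemma map_mapDomainRingHom_mul (f : Coind k φ M) (a : k[Γ]) (b : k[Γ']) :
    f (mapDomainRingHom k φ a * b) = a • f b := f.2 a b

@[simp] lemma add_apply (f g : Coind k φ M) (b : k[Γ']) : (f + g) b = f b + g b := rfl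
@[simp] lemma zero_apply (b : k[Γ']) : (0 : Coind k φ M) b = 0 := rfl

instance : SMul k[Γ'] (Coind k φ M) where
  smul s f := ⟨f.1.comp (AddMonoidHom.mulRight s), fun a b => by
    simp only [AddMonoidHom.comp_apply, AddMonoidHom.coe_mulRight, mul_assoc]
    exact f.2 a (b * s)⟩

@[simp] lemma smul_apply (s : k[Γ']) (f : Coind k φ M) (b : k[Γ']) : (s • f) b = f (b * s) := rfl

instance : Module k[Γ'] (Coind k φ M) where
  one_smul f := ext fun b => by simp
  mul_smul s t f := ext fun b => by simp [mul_assoc]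
  smul_zero s := ext fun b => by simp
  smul_add s f g := ext fun b => by simp
  add_smul s t f := ext fun b => by simp [mul_add, map_add]
  zero_smul f := ext fun b => by simp

def evalOne : Coind k φ M →+ M where
  toFun f := f 1
  map_zero' := rfl
  map_add' _ _ := rfl

lemma evalOne_smul (a : k[Γ]) (f : Coind k φ M) :
    evalOne (mapDomainRingHom k φ a • f) = a • evalOne f := by
  change f (1 * _) = a • f 1
  rw [one_mul, ← mul_one (mapDomainRingHom k φ a), map_mapDomainRingHom_mul]

variable (k) (hφ : Function.Injective φ)

def extendByZero : M →+ Coind k φ M where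
  toFun m := ⟨((smulAddHom k[Γ] M).flip m).comp (comapDomainAddMonoidHom φ hφ), fun a b => by
    change comapDomain φ hφ (mapDomainRingHom k φ a * b) • m = a • comapDomain φ hφ b • m
    rw [comapDomain_mapDomainRingHom_mul, mul_smul]⟩
  map_zero' := ext fun _ => smul_zero _
  map_add' _ _ := ext fun _ => smul_add _ _ _

lemma extendByZero_apply (m : M) (b : k[Γ']) :
    extendByZero k hφ m b = comapDomain φ hφ b • m :=
  rfl

lemma extendByZero_smul (a : k[Γ]) (m : M) :
    extendByZero k hφ (a • m) = mapDomainRingHom k φ a • extendByZero k hφ m :=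
  ext fun b => by
    rw [smul_apply, extendByZero_apply, extendByZero_apply, comapDomain_mul_mapDomainRingHom,
      mul_smul]

lemma evalOne_extendByZero (m : M) : evalOne (extendByZero k hφ m) = m := by
  change extendByZero k hφ m 1 = m
  rw [extendByZero_apply, comapDomain_one, one_smul]

end Coind
end Coinduction

theorem exists_equivariant_retraction {k Γ Γ' M I : Type u} [Ring k] [Group Γ] [Group Γ']
    {φ : Γ →* Γ'} (hφ : Function.Injective φ) [AddCommGroup M] [Module k[Γ] M]
    [AddCommGroup I] [Module k[Γ'] I] (u : M →+ I)
    (hext : ∀ (W : Type u) [AddCommGroup W] [Module k[Γ'] W] (v : M →+ W),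
      (∀ (a : k[Γ]) (m : M), v (a • m) = mapDomainRingHom k φ a • v m) →
      ∃ w : I →+ W, (∀ (s : k[Γ']) (x : I), w (s • x) = s • w x) ∧ w.comp u = v) :
    ∃ r : I →+ M, (∀ (a : k[Γ]) (x : I), r (mapDomainRingHom k φ a • x) = a • r x) ∧
      ∀ m, r (u m) = m := by
  obtain ⟨w, hw, hwu⟩ :=
    hext (Coind k φ M) (Coind.extendByZero k hφ) (Coind.extendByZero_smul k hφ)
  refine ⟨Coind.evalOne.comp w, fun a x => ?_, fun m => ?_⟩
  · rw [AddMonoidHom.comp_apply, hw, Coind.evalOne_smul, AddMonoidHom.comp_apply]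
  · rw [AddMonoidHom.comp_apply, ← AddMonoidHom.comp_apply w, hwu,
      Coind.evalOne_extendByZero]

theorem stmt7_general {Γ Γ' : Type} [Group Γ] [Group Γ'] (φ : Γ →* Γ')
    (hφ : Function.Injective φ)
    (H' : Subgroup Γ')
    -- every `ℤΓ'`-module projective over `ℤH'` is projective over `ℤΓ'`:
    (hyp : ∀ (P : Type) [AddCommGroup P] [Module (GR Γ') P],
      IsProjOver H' P → Module.Projective (GR Γ') P)
    (M : Type) [AddCommGroup M] [Module (GR Γ) M]
    -- `I`, together with the `ℤΓ`-equivariant map `u : M → I`, is the induced module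
    -- `ℤΓ' ⊗_{ℤΓ} M`, characterized by its universal property:
    (I : Type) [AddCommGroup I] [Module (GR Γ') I] (u : M →+ I)
    (hu : ∀ (r : GR Γ) (m : M), u (r • m) = (mapDomainRingHom ℤ φ r) • u m)
    (huniv : ∀ (W : Type) [AddCommGroup W] [Module (GR Γ') W] (v : M →+ W),
      (∀ (r : GR Γ) (m : M), v (r • m) = (mapDomainRingHom ℤ φ r) • v m) →
      ∃! w : I →+ W, (∀ (s : GR Γ') (x : I), w (s • x) = s • w x) ∧ w.comp u = v)
    -- the induced module is projective over `ℤH'`: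
    (hI : IsProjOver H' I) :
    Module.Projective (GR Γ) M := by
  let : Module (GR Γ) (GR Γ') := Module.compHom _ (mapDomainRingHom ℤ φ)
  let : Module (GR Γ) I := Module.compHom _ (mapDomainRingHom ℤ φ)
  have : Module.Free (GR Γ) (GR Γ') := MonoidAlgebra.free_of_injective hφ
  have : IsScalarTower (GR Γ) (GR Γ') (GR Γ') := SMul.comp.isScalarTower _
  have : IsScalarTower (GR Γ) (GR Γ') I := SMul.comp.isScalarTower _
  have : Module.Projective (GR Γ') I := hyp I hI
  have : Module.Projective (GR Γ) I := .trans (S := GR Γ')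
  obtain ⟨r, hr, hru⟩ :=
    exists_equivariant_retraction hφ u fun W _ _ v hv => (huniv W v hv).exists
  exact .of_split (⟨u, hu⟩ : M →ₗ[GR Γ] I) ⟨r, hr⟩ (LinearMap.ext hru)

theorem stmt7 {Γ Γ' : Type} [Group Γ] [Group Γ'] (φ : Γ →* Γ')
    (hφ : Function.Injective φ)
    (H' : Subgroup Γ') [H'.FiniteIndex] [(H'.comap φ).FiniteIndex]
    -- every `ℤΓ'`-module projective over `ℤH'` is projective over `ℤΓ'`:
    (hyp : ∀ (P : Type) [AddCommGroup P] [Module (GR Γ') P],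
      IsProjOver H' P → Module.Projective (GR Γ') P)
    (M : Type) [AddCommGroup M] [Module (GR Γ) M]
    (hM : IsProjOver (H'.comap φ) M)
    -- `I`, together with the `ℤΓ`-equivariant map `u : M → I`, is the induced module
    -- `ℤΓ' ⊗_{ℤΓ} M`, characterized by its universal property:
    (I : Type) [AddCommGroup I] [Module (GR Γ') I] (u : M →+ I)
    (hu : ∀ (r : GR Γ) (m : M), u (r • m) = (mapDomainRingHom ℤ φ r) • u m)
    (huniv : ∀ (W : Type) [AddCommGroup W] [Module (GR Γ') W] (v : M →+ W),
      (∀ (r : GR Γ) (m : M), v (r • m) = (mapDomainRingHom ℤ φ r) • v m) →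
      ∃! w : I →+ W, (∀ (s : GR Γ') (x : I), w (s • x) = s • w x) ∧ w.comp u = v)
    -- the induced module is projective over `ℤH'`:
    (hI : IsProjOver H' I) :
    Module.Projective (GR Γ) M :=
  stmt7_general φ hφ H' hyp M I u hu huniv hI
end
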